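/- arXiv:1302.1167 — 3 statements merged into one kernel-verified Lean document; each statement's English description precedes it below -/
import Mathlib

section
/- For every natural number n ≥ 1 and every x with 0 ≤ x ≤ π/(2(n+1)), we have n·sin((n+1)·x) ≤ (n+1)·sin(n·x). -/
/-!
`sin` is concave on `[0, π]` and vanishes at `0`, so `t * sin y ≤ sin (t * y)` for `t ∈ [0, 1]`;
take `y = (n + 1) * x ≤ π / 2` and `t = n / (n + 1)`.
-/

open Real

theorem ConcaveOn.smul_le_apply_smul {𝕜 E : Type*} [Field 𝕜] [LinearOrder 𝕜]
    [IsStrictOrderedRing 𝕜] [AddCommGroup E] [Module 𝕜 E] {s : Set E} {f : E → 𝕜}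
    (hf : ConcaveOn 𝕜 s f) (h0 : (0 : E) ∈ s) (hf0 : 0 ≤ f 0) {y : E} (hy : y ∈ s) {t : 𝕜}
    (ht0 : 0 ≤ t) (ht1 : t ≤ 1) : t • f y ≤ f (t • y) := by
  have hcomb := hf.2 h0 hy (sub_nonneg.2 ht1) ht0 (sub_add_cancel 1 t)
  rw [smul_zero, zero_add] at hcomb
  calc t • f y ≤ (1 - t) • f 0 + t • f y :=
        le_add_of_nonneg_left (smul_nonneg (sub_nonneg.2 ht1) hf0)
    _ ≤ f (t • y) := hcomb

theorem Real.mul_sin_le_sin_mul {t y : ℝ} (ht0 : 0 ≤ t) (ht1 : t ≤ 1) (hy0 : 0 ≤ y)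
    (hyπ : y ≤ π) : t * sin y ≤ sin (t * y) :=
  strictConcaveOn_sin_Icc.concaveOn.smul_le_apply_smul ⟨le_rfl, pi_pos.le⟩ sin_zero.ge
    ⟨hy0, hyπ⟩ ht0 ht1

theorem stmt_4_general (n : ℕ) (x : ℝ) (hx0 : 0 ≤ x)
    (hx : x ≤ Real.pi / (2 * (n + 1))) :
    n * Real.sin ((n + 1) * x) ≤ (n + 1) * Real.sin (n * x) := by
  have hn1 : (0 : ℝ) < n + 1 := by positivity
  have hyπ : (n + 1) * x ≤ π := by
    rw [le_div_iff₀ (by positivity)] at hx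
    linarith [pi_pos]
  have hsin := mul_sin_le_sin_mul (t := n / (n + 1)) (by positivity)
    (div_le_one_of_le₀ (by linarith) hn1.le) (by positivity) hyπ
  rw [← mul_assoc, div_mul_cancel₀ _ hn1.ne'] at hsin
  calc (n : ℝ) * sin ((n + 1) * x) = (n + 1) * (n / (n + 1) * sin ((n + 1) * x)) := by
        field_simp
    _ ≤ (n + 1) * sin (n * x) := mul_le_mul_of_nonneg_left hsin hn1.le

theorem stmt_4 (n : ℕ) (hn : 1 ≤ n) (x : ℝ) (hx0 : 0 ≤ x)
    (hx : x ≤ Real.pi / (2 * (n + 1))) :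
    n * Real.sin ((n + 1) * x) ≤ (n + 1) * Real.sin (n * x) :=
  stmt_4_general n x hx0 hx
end

section
/- For every natural number n ≥ 1 and every x with 0 ≤ x < π/(2(n+1)), we have n·tan((n+1)·x) ≥ (n+1)·tan(n·x). -/
/-! Since `tan 0 = 0` and `tan` is convex on `[0, π/2)` (its derivative `1 / cos² x` increases
there), the slope `tan y / y` increases on `(0, π/2)`. Comparing it at `y = n x` and
`y = (n + 1) x` gives the inequality. -/

open Set

theorem ConvexOn.map_smul_le_of_map_zero {E : Type*} [AddCommGroup E] [Module ℝ E] {s : Set E}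
    {f : E → ℝ} (hf : ConvexOn ℝ s f) (h0 : 0 ∈ s) (hf0 : f 0 = 0) {y : E} (hy : y ∈ s)
    {t : ℝ} (ht0 : 0 ≤ t) (ht1 : t ≤ 1) : f (t • y) ≤ t * f y := by
  simpa [hf0] using hf.2 h0 hy (sub_nonneg.2 ht1) ht0 (sub_add_cancel 1 t)

namespace Real

theorem convexOn_tan : ConvexOn ℝ (Ico 0 (π / 2)) tan := by
  have hsub : Ico 0 (π / 2) ⊆ Ioo (-(π / 2)) (π / 2) :=
    fun y hy => ⟨by linarith [hy.1, pi_pos], hy.2⟩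
  refine MonotoneOn.convexOn_of_deriv (convex_Ico 0 (π / 2))
    (continuousOn_tan_Ioo.mono hsub) ?_ ?_
  · rw [interior_Ico]
    exact fun y hy => (differentiableAt_tan.2 (cos_pos_of_mem_Ioo (hsub
      (Ioo_subset_Ico_self hy))).ne').differentiableWithinAt
  · rw [interior_Ico]
    intro y hy z hz hyz
    have hcos_z : 0 < cos z := cos_pos_of_mem_Ioo (hsub (Ioo_subset_Ico_self hz))
    have hcos_le : cos z ≤ cos y :=
      cos_le_cos_of_nonneg_of_le_pi hy.1.le (by linarith [hz.2, pi_pos]) hyz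
    simp only [deriv_tan]
    gcongr

theorem mul_tan_le_mul_tan {a b x : ℝ} (ha : 0 ≤ a) (hab : a ≤ b) (hx : 0 ≤ x)
    (hbx : b * x < π / 2) : b * tan (a * x) ≤ a * tan (b * x) := by
  rcases ha.eq_or_lt with rfl | ha
  · simp
  have hb : 0 < b := ha.trans_le hab
  have hconv := convexOn_tan.map_smul_le_of_map_zero ⟨le_rfl, by positivity⟩ tan_zero
    ⟨by positivity, hbx⟩ (div_nonneg ha.le hb.le) ((div_le_one hb).2 hab)
  rw [smul_eq_mul, ← mul_assoc, div_mul_cancel₀ a hb.ne'] at hconv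
  calc b * tan (a * x) ≤ b * (a / b * tan (b * x)) := by gcongr
    _ = a * tan (b * x) := by field_simp

end Real

theorem stmt_5_general (n : ℕ) (x : ℝ) (hx0 : 0 ≤ x)
    (hx : x < Real.pi / (2 * (n + 1))) :
    (n + 1) * Real.tan (n * x) ≤ n * Real.tan ((n + 1) * x) := by
  refine Real.mul_tan_le_mul_tan n.cast_nonneg (le_add_of_nonneg_right zero_le_one) hx0 ?_
  rw [lt_div_iff₀ (by positivity)] at hx
  linarith

theorem stmt_5 (n : ℕ) (hn : 1 ≤ n) (x : ℝ) (hx0 : 0 ≤ x)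
    (hx : x < Real.pi / (2 * (n + 1))) :
    (n + 1) * Real.tan (n * x) ≤ n * Real.tan ((n + 1) * x) :=
  stmt_5_general n x hx0 hx
end

section
/- The function x ↦ tan(x)/x is monotone (increasing) on the interval (0, π/2). -/
/-! The derivative of `tan x / x` is `(x - sin x cos x) / (x cos x)²`, and its numerator is
`x - sin (2x) / 2 ≥ 0` because `sin t ≤ t` for `t ≥ 0`. -/

open Real Set

lemma Real.sin_mul_cos_le_self {x : ℝ} (hx : 0 ≤ x) : sin x * cos x ≤ x := by
  have h := sin_le (by linarith : 0 ≤ 2 * x)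
  rw [sin_two_mul] at h
  linarith

lemma Real.hasDerivAt_tan_div_self {x : ℝ} (hx : x ≠ 0) (hcos : cos x ≠ 0) :
    HasDerivAt (fun x => tan x / x) ((x - sin x * cos x) / (x * cos x) ^ 2) x := by
  refine ((hasDerivAt_tan hcos).div (hasDerivAt_id x) hx).congr_deriv ?_
  rw [tan_eq_sin_div_cos, id]
  field_simp

theorem stmt_9 : MonotoneOn (fun x : ℝ => Real.tan x / x) (Set.Ioo 0 (Real.pi / 2)) := by
  have hderiv : ∀ x ∈ Ioo 0 (π / 2),
      HasDerivAt (fun x => tan x / x) ((x - sin x * cos x) / (x * cos x) ^ 2) x := fun x hx =>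
    hasDerivAt_tan_div_self hx.1.ne' (cos_pos_of_mem_Ioo ⟨by linarith [hx.1, pi_pos], hx.2⟩).ne'
  refine monotoneOn_of_hasDerivWithinAt_nonneg (convex_Ioo _ _)
    (fun x hx => (hderiv x hx).continuousAt.continuousWithinAt)
    (fun x hx => (hderiv x (by rwa [interior_Ioo] at hx)).hasDerivWithinAt) fun x hx => ?_
  rw [interior_Ioo] at hx
  exact div_nonneg (sub_nonneg.2 (sin_mul_cos_le_self hx.1.le)) (sq_nonneg _)
end
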